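/- Let M be a matroid possessing a circuit C and a cocircuit D with |C ∩ D| odd and at least 3. Then M has a minor with finite ground set of size 2·|C ∩ D| − 2 in which some set is simultaneously a circuit, a cocircuit, spanning, and cospanning. -/

import Mathlib

open Set

namespace Matroid

variable {α : Type*}

/-- A circuit of a matroid is a minimal dependent set. -/
def Circuit (M : Matroid α) (C : Set α) : Prop :=
  M.Dep C ∧ ∀ D, M.Dep D → D ⊆ C → D = C

/-- A cocircuit is a circuit of the dual matroid. -/
def Cocircuit (M : Matroid α) (D : Set α) : Prop := M✶.Circuit D

/-- The matroid obtained by deleting the set `D`. -/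
def delete' (M : Matroid α) (D : Set α) : Matroid α := M ↾ (M.E \ D)

/-- The matroid obtained by contracting the set `C`. -/
def contract' (M : Matroid α) (C : Set α) : Matroid α := ((M✶).delete' C)✶

/-- `N` is a minor of `M` if it is obtained from `M` by contracting a set `C`
and deleting a set `D`, where `C` and `D` are disjoint subsets of the ground set. -/
def IsMinor' (N M : Matroid α) : Prop :=
  ∃ C D, Disjoint C D ∧ C ∪ D ⊆ M.E ∧ N = (M.contract' C).delete' D

/-- A scrawl is a union of circuits. -/
def Scrawl (M : Matroid α) (W : Set α) : Prop :=
  ∃ S : Set (Set α), (∀ C ∈ S, M.Circuit C) ∧ W = ⋃₀ S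

/-- A matroid is tame if every circuit-cocircuit intersection is finite. -/
def Tame (M : Matroid α) : Prop :=
  ∀ C D, M.Circuit C → M.Cocircuit D → (C ∩ D).Finite

/-- A `k`-painting of a matroid: nonzero coefficients on each circuit and each
cocircuit such that each circuit-cocircuit pair is "orthogonal". -/
def IsPainting {k : Type*} [Field k] (M : Matroid α)
    (c : Set α → α → k) (d : Set α → α → k) : Prop :=
  (∀ C, M.Circuit C → ∀ e ∈ C, c C e ≠ 0) ∧
  (∀ D, M.Cocircuit D → ∀ e ∈ D, d D e ≠ 0) ∧
  (∀ C D, M.Circuit C → M.Cocircuit D →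
    (C ∩ D).Finite ∧ ∑ᶠ e ∈ C ∩ D, c C e * d D e = 0)

end Matroid

/-!
Contracting `C \ D` and deleting `D \ C` leaves `X = C ∩ D` both a circuit and a cocircuit.
Fix `e ∈ X` and extend `X \ {e}` to a base `B`; contracting `B \ X` keeps `X` a circuit and a
cocircuit and makes `X \ {e}` a base. The dual move, deleting `B' \ X` for a cobase `B'`,
makes `X \ {e}` a cobase as well. Then `X` is spanning and cospanning, and the ground set is
the disjoint union of the base `X \ {e}` and its complement, a base of the dual, so it has
`2 (|X| - 1)` elements.
-/

namespace Matroid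

variable {α : Type*} {M N : Matroid α} {B C D K X : Set α} {e : α}

lemma circuit_iff_isCircuit : M.Circuit C ↔ M.IsCircuit C :=
  ⟨fun h ↦ ⟨h.1, fun _ hD hDC ↦ (h.2 _ hD hDC).symm.subset⟩,
    fun h ↦ ⟨h.dep, fun _ hD hDC ↦ h.eq_of_dep_subset hD hDC⟩⟩

lemma cocircuit_iff_isCocircuit : M.Cocircuit D ↔ M.IsCocircuit D :=
  circuit_iff_isCircuit

lemma IsMinor.isMinor' (h : N ≤m M) : N.IsMinor' M := by
  obtain ⟨C, D, hC, hD, hCD, rfl⟩ := h.exists_eq_contract_delete_disjoint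
  exact ⟨C, D, hCD, union_subset hC hD, rfl⟩

lemma IsCircuit.isCircuit_contract_delete_inter (hC : M.IsCircuit C) (hX : (C ∩ D).Nonempty) :
    (M ／ (C \ D) ＼ (D \ C)).IsCircuit (C ∩ D) := by
  have h := hC.contract_sdiff_isCircuit hX inter_subset_left
  rw [sdiff_self_inter] at h
  exact (circuit_iff_delete_of_disjoint (disjoint_sdiff_right.mono_left inter_subset_left)).1 h

lemma IsCocircuit.isCocircuit_contract_delete_inter (hD : M.IsCocircuit D)
    (hX : (C ∩ D).Nonempty) : (M ／ (C \ D) ＼ (D \ C)).IsCocircuit (C ∩ D) := by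
  have hD' : (M ／ (C \ D)).IsCocircuit D := contract_isCocircuit_iff.2 ⟨hD, disjoint_sdiff_right⟩
  have h := hD'.delete_sdiff_isCocircuit inter_subset_right hX
  rwa [sdiff_inter_self_eq_sdiff] at h

/-- `X ∪ K` is `X \ {e} ∪ K` with one element added, so `X` is its only circuit; hence every
`X \ {f} ∪ K` is independent. -/
lemma IsCircuit.contract_isCircuit_of_indep (hX : M.IsCircuit X) (hXK : Disjoint X K)
    (hI : M.Indep (X \ {e} ∪ K)) : (M ／ K).IsCircuit X := by
  have hK : M.Indep K := hI.subset subset_union_right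
  have hXI : X ⊆ insert e (X \ {e} ∪ K) := fun x hx ↦ by
    by_cases hxe : x = e
    · exact .inl hxe
    · exact .inr (.inl ⟨hx, hxe⟩)
  refine isCircuit_iff_dep_forall_sdiff_singleton_indep.2
    ⟨hX.contract_dep hXK.symm, fun f hf ↦ hK.contract_indep_iff.2
      ⟨hXK.mono_left sdiff_subset, by_contra fun hdep ↦ ?_⟩⟩
  obtain ⟨C', hC'ss, hC'⟩ := (Dep.exists_isCircuit_subset
    ⟨hdep, union_subset (sdiff_subset.trans hX.subset_ground) hK.subset_ground⟩)
  have hC'I : C' ⊆ insert e (X \ {e} ∪ K) := fun x hx ↦ by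
    rcases hC'ss hx with hx | hx
    · exact hXI hx.1
    · exact .inr (.inr hx)
  have hC'X : C' = X :=
    (hC'.eq_fundCircuit_of_subset hI hC'I).trans (hX.eq_fundCircuit_of_subset hI hXI).symm
  rcases hC'ss (hC'X ▸ hf) with h | h
  · exact h.2 rfl
  · exact hXK.notMem_of_mem_left hf h

lemma IsCircuit.exists_contract_isBase (hX : M.IsCircuit X) (he : e ∈ X) :
    ∃ K, Disjoint X K ∧ (M ／ K).IsCircuit X ∧ (M ／ K).IsBase (X \ {e}) := by
  obtain ⟨B, hB, hXB⟩ := (hX.sdiff_singleton_indep he).exists_isBase_superset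
  have heB : e ∉ B := fun heB ↦ hX.not_indep <| hB.indep.subset fun x hx ↦ by
    by_cases hxe : x = e
    · exact hxe ▸ heB
    · exact hXB ⟨hx, hxe⟩
  have hB_eq : X \ {e} ∪ B \ X = B := by
    refine (union_subset hXB sdiff_subset).antisymm fun x hx ↦ ?_
    by_cases hxX : x ∈ X
    · exact .inl ⟨hxX, fun hxe ↦ heB (hxe ▸ hx)⟩
    · exact .inr ⟨hx, hxX⟩
  refine ⟨B \ X, disjoint_sdiff_right, ?_, ?_⟩
  · exact hX.contract_isCircuit_of_indep disjoint_sdiff_right (by rw [hB_eq]; exact hB.indep)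
  · exact (hB.indep.subset sdiff_subset).contract_isBase_iff.2
      ⟨by rwa [hB_eq], disjoint_sdiff_right.mono_left sdiff_subset⟩

lemma IsBase.isBase_delete_of_disjoint (hB : M.IsBase B) (hBD : Disjoint B D) :
    (M ＼ D).IsBase B :=
  delete_isBase_iff.2 <| hB.isBasis_ground.isBasis_subset
    (subset_sdiff.2 ⟨hB.subset_ground, hBD⟩) sdiff_subset

lemma IsCircuit.exists_isMinor_isBase_dual_isBase (hX : M.IsCircuit X) (hX' : M.IsCocircuit X)
    (he : e ∈ X) : ∃ N, N ≤m M ∧ N.IsCircuit X ∧ N.IsCocircuit X ∧ N.IsBase (X \ {e}) ∧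
      N✶.IsBase (X \ {e}) := by
  obtain ⟨K, hXK, hXC, hB⟩ := hX.exists_contract_isBase he
  have hXC' : (M ／ K).IsCocircuit X := contract_isCocircuit_iff.2 ⟨hX', hXK⟩
  obtain ⟨K', hXK', hXD, hB'⟩ := hXC'.isCircuit.exists_contract_isBase he
  rw [← dual_delete] at hXD hB'
  exact ⟨M ／ K ＼ K', contract_delete_isMinor M K K',
    (circuit_iff_delete_of_disjoint hXK').1 hXC, hXD,
    hB.isBase_delete_of_disjoint (hXK'.mono_left sdiff_subset), hB'⟩

lemma IsBase.ground_finite_of_dual (hB : M.IsBase B) (hB' : M✶.IsBase B) (hfin : B.Finite) :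
    M.E.Finite :=
  (hfin.union (hB'.finite_of_finite hfin hB.compl_isBase_dual)).subset
    (by rw [union_sdiff_self]; exact subset_union_right)

lemma IsBase.ncard_ground_of_dual (hB : M.IsBase B) (hB' : M✶.IsBase B) (hfin : B.Finite) :
    M.E.ncard = 2 * B.ncard := by
  have hcompl : (M.E \ B).ncard = B.ncard :=
    hB.compl_isBase_dual.ncard_eq_ncard_of_isBase hB'
  rw [← ncard_sdiff_add_ncard_of_subset hB.subset_ground (hB.ground_finite_of_dual hB' hfin),
    hcompl, two_mul]

end Matroid

open Matroid in
theorem stmt10_general {α : Type*} (M : Matroid α) (C D : Set α)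
    (hC : M.Circuit C) (hD : M.Cocircuit D) (hfin : (C ∩ D).Finite)
    (h3 : 3 ≤ (C ∩ D).ncard) :
    ∃ N : Matroid α, N.IsMinor' M ∧ N.E.Finite ∧ N.E.ncard = 2 * (C ∩ D).ncard - 2 ∧
      ∃ Z, N.Circuit Z ∧ N.Cocircuit Z ∧ N.Spanning Z ∧ N✶.Spanning Z := by
  obtain ⟨e, he⟩ : (C ∩ D).Nonempty := nonempty_of_ncard_ne_zero (by omega)
  obtain ⟨N, hNM, hXC, hXD, hB, hB'⟩ :=
    (circuit_iff_isCircuit.1 hC).isCircuit_contract_delete_inter ⟨e, he⟩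
      |>.exists_isMinor_isBase_dual_isBase
        ((cocircuit_iff_isCocircuit.1 hD).isCocircuit_contract_delete_inter ⟨e, he⟩) he
  have hBfin : ((C ∩ D) \ {e}).Finite := hfin.subset sdiff_subset
  refine ⟨N, (hNM.trans (contract_delete_isMinor _ _ _)).isMinor',
    hB.ground_finite_of_dual hB' hBfin, ?_, C ∩ D, circuit_iff_isCircuit.2 hXC,
    cocircuit_iff_isCocircuit.2 hXD, hB.spanning.superset sdiff_subset hXC.subset_ground,
    hB'.spanning.superset sdiff_subset hXD.subset_ground⟩
  rw [hB.ncard_ground_of_dual hB' hBfin, ncard_sdiff_singleton_of_mem he]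
  omega

/-- If a circuit and a cocircuit meet in an odd number `k ≥ 3` of elements, then `M` has
a finite minor of size `2k - 2` in which some set is simultaneously a circuit, a
cocircuit, spanning and cospanning. -/
theorem stmt10 {α : Type*} (M : Matroid α) (C D : Set α)
    (hC : M.Circuit C) (hD : M.Cocircuit D) (hfin : (C ∩ D).Finite)
    (hodd : Odd (C ∩ D).ncard) (h3 : 3 ≤ (C ∩ D).ncard) :
    ∃ N : Matroid α, N.IsMinor' M ∧ N.E.Finite ∧ N.E.ncard = 2 * (C ∩ D).ncard - 2 ∧
      ∃ Z, N.Circuit Z ∧ N.Cocircuit Z ∧ N.Spanning Z ∧ N✶.Spanning Z :=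
  stmt10_general M C D hC hD hfin h3
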